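/- Let P be a finite nonempty type, E = EuclideanSpace ℝ (Fin n), f : P → E → E a family of continuously differentiable vector fields whose initial value problems have unique solutions, and let τd > 0 be a dwell time. Then for all ω ν : E, the following are equivalent: (i) there exist m ≥ 1, modes q 1, …, q m : P, and durations s 1, …, s m with s i ≥ τd for all 1 ≤ i < m and s m ≥ 0, together with a continuous φ : ℝ → E with φ 0 = ω and φ (s 1 + ⋯ + s m) = ν that, on each consecutive time interval of length s i, solves the ODE x' = f (q i) x (i.e., ν is reachable from ω by a finite concatenation of flows in which every segment except possibly the last lasts at least τd); (ii) there exist a switching signal (τ, σ) whose switching times satisfy τ (i+1) − τ i ≥ τd for all i, a time T ≥ 0, and a solution φ of the switched system from ω following (τ, σ) up to time T with φ T = ν. -/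

import Mathlib

/-!
Clipping the switching times of a signal at `T` gives a finite concatenation directly.
Conversely, the partial sums of the durations are switching times with dwell gaps except possibly
the last one; the signal is completed by postponing the last switch to at least `τd` after the
previous one and switching with period `τd` afterwards. Past the final time `T` the solution is
continued affinely with its velocity at `T`, so that it keeps the right derivative at `T` within
the longer last interval.
-/

open Set Filter Topology

/-- `(τ, σ)` is a switching signal. -/
def IsSwitchingSignal (P : Type*) (τ : ℕ → ℝ) (σ : ℕ → P) : Prop :=
  StrictMono τ ∧ τ 0 = 0 ∧ Filter.Tendsto τ Filter.atTop Filter.atTop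

/-- `φ` is a solution of the switched system `f` from `ω` following `(τ, σ)` up to time `T`. -/
def IsSwitchedSolution {n : ℕ} {P : Type*}
    (f : P → EuclideanSpace ℝ (Fin n) → EuclideanSpace ℝ (Fin n))
    (τ : ℕ → ℝ) (σ : ℕ → P) (ω : EuclideanSpace ℝ (Fin n)) (T : ℝ)
    (φ : ℝ → EuclideanSpace ℝ (Fin n)) : Prop :=
  Continuous φ ∧ φ 0 = ω ∧
    ∀ i : ℕ, 1 ≤ i → ∀ s ∈ Set.Icc (τ (i - 1)) (τ i) ∩ Set.Icc (0 : ℝ) T,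
      HasDerivWithinAt φ (f (σ i) (φ s)) (Set.Icc (τ (i - 1)) (τ i)) s

section DwellTime

variable {τ : ℕ → ℝ} {d : ℝ}

lemma add_mul_le_of_le_sub_succ (h : ∀ i, d ≤ τ (i + 1) - τ i) (k : ℕ) :
    τ 0 + k * d ≤ τ k := by
  induction k with
  | zero => simp
  | succ k ih => push_cast; linarith [h k]

lemma strictMono_of_le_sub_succ (hd : 0 < d) (h : ∀ i, d ≤ τ (i + 1) - τ i) : StrictMono τ :=
  strictMono_nat_of_lt_succ fun i => by linarith [h i]

lemma tendsto_atTop_of_le_sub_succ (hd : 0 < d) (h : ∀ i, d ≤ τ (i + 1) - τ i) :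
    Tendsto τ atTop atTop :=
  tendsto_atTop_mono (add_mul_le_of_le_sub_succ h)
    (tendsto_atTop_add_const_left _ _ (tendsto_natCast_atTop_atTop.atTop_mul_const hd))

lemma isSwitchingSignal_of_le_sub_succ {P : Type*} (σ : ℕ → P) (hd : 0 < d)
    (h : ∀ i, d ≤ τ (i + 1) - τ i) (h0 : τ 0 = 0) : IsSwitchingSignal P τ σ :=
  ⟨strictMono_of_le_sub_succ hd h, h0, tendsto_atTop_of_le_sub_succ hd h⟩

lemma exists_le_sub_succ_extension (t : ℕ → ℝ) {m : ℕ}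
    (hstep : ∀ i, 1 ≤ i → i < m → d ≤ t i - t (i - 1)) (T : ℝ) :
    ∃ τ : ℕ → ℝ, (∀ i, d ≤ τ (i + 1) - τ i) ∧ (∀ i < m, τ i = t i) ∧ T ≤ τ m := by
  refine ⟨fun i => if i < m then t i else max T (t (m - 1) + d) + (i - m : ℕ) * d,
    fun i => ?_, fun i hi => if_pos hi, by simp⟩
  dsimp only
  rcases lt_trichotomy (i + 1) m with hlt | rfl | hgt
  · rw [if_pos hlt, if_pos (by omega)]
    simpa using hstep (i + 1) (by omega) hlt
  · rw [if_neg (lt_irrefl _), if_pos (by omega), Nat.sub_self, Nat.add_sub_cancel]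
    simp only [Nat.cast_zero, zero_mul, add_zero]
    linarith [le_max_right T (t i + d)]
  · rw [if_neg (by omega), if_neg (by omega), (by omega : i + 1 - m = (i - m) + 1)]
    push_cast
    linarith

end DwellTime

lemma exists_le_le_succ_of_tendsto_atTop {α : Type*} [LinearOrder α] [NoMaxOrder α]
    {u : ℕ → α} (hu : Tendsto u atTop atTop) {x : α} (h0 : u 0 ≤ x) :
    ∃ k, u k ≤ x ∧ x ≤ u (k + 1) := by
  by_contra! h
  have hle : ∀ k, u k ≤ x := fun k => Nat.rec h0 (fun k hk => (h k hk).le) k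
  obtain ⟨k, hk⟩ := (hu.eventually_gt_atTop x).exists
  exact (hle k).not_gt hk

lemma sum_Icc_one_sub_pred {M : Type*} [AddCommGroup M] (t : ℕ → M) (i : ℕ) :
    ∑ j ∈ Finset.Icc 1 i, (t j - t (j - 1)) = t i - t 0 := by
  induction i with
  | zero => simp
  | succ i ih =>
    rw [Finset.sum_Icc_succ_top (by omega), ih, Nat.add_sub_cancel]
    abel

section AffineExtension

variable {E : Type*} [NormedAddCommGroup E] [NormedSpace ℝ E] {φ : ℝ → E} {T : ℝ} {v : E}

noncomputable def extendAffine (φ : ℝ → E) (T : ℝ) (v : E) (x : ℝ) : E :=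
  if x ≤ T then φ x else φ T + (x - T) • v

lemma extendAffine_of_le {x : ℝ} (hx : x ≤ T) : extendAffine φ T v x = φ x := if_pos hx

lemma continuous_extendAffine (hφ : Continuous φ) : Continuous (extendAffine φ T v) :=
  Continuous.if_le hφ (by fun_prop) continuous_id continuous_const fun x hx => by simp [hx]

lemma hasDerivWithinAt_extendAffine_Ici : HasDerivWithinAt (extendAffine φ T v) v (Ici T) T := by
  have hline : HasDerivAt (fun x : ℝ => φ T + (x - T) • v) v T := by
    simpa using (((hasDerivAt_id T).sub_const T).smul_const v).const_add (φ T)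
  refine hline.hasDerivWithinAt.congr (fun x hx => ?_) (by simp [extendAffine])
  rcases (mem_Ici.1 hx).lt_or_eq with hlt | rfl
  · simp [extendAffine, not_le.2 hlt]
  · simp [extendAffine]

lemma HasDerivWithinAt.extendAffine_Icc {a b : ℝ} (h : HasDerivWithinAt φ v (Icc a T) T)
    (ha : a ≤ T) (hb : T ≤ b) : HasDerivWithinAt (extendAffine φ T v) v (Icc a b) T := by
  have hleft : HasDerivWithinAt (extendAffine φ T v) v (Icc a T) T :=
    h.congr (fun x hx => extendAffine_of_le hx.2) (extendAffine_of_le le_rfl)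
  rw [← Icc_union_Icc_eq_Icc ha hb]
  exact hleft.union (hasDerivWithinAt_extendAffine_Ici.mono Icc_subset_Ici_self)

lemma hasDerivWithinAt_extendAffine_Icc_of_ode {g : E → E} {a b : ℝ}
    (hode : ∀ s ∈ Icc a T, HasDerivWithinAt φ (g (φ s)) (Icc a T) s) (hb : T ≤ b)
    {s : ℝ} (hs : s ∈ Icc a T) :
    HasDerivWithinAt (extendAffine φ T (g (φ T))) (g (extendAffine φ T (g (φ T)) s))
      (Icc a b) s := by
  rw [extendAffine_of_le hs.2]
  rcases hs.2.lt_or_eq with hlt | rfl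
  · have hnhds : Icc a T ∈ 𝓝[Icc a b] s :=
      mem_nhdsWithin.2 ⟨Iio T, isOpen_Iio, hlt, fun x hx => ⟨hx.2.1, hx.1.le⟩⟩
    exact ((hode s hs).congr (fun x hx => extendAffine_of_le hx.2)
      (extendAffine_of_le hs.2)).mono_of_mem_nhdsWithin hnhds
  · exact (hode s hs).extendAffine_Icc hs.1 hb

end AffineExtension

def SolvesPiecewise {P E : Type*} [NormedAddCommGroup E] [NormedSpace ℝ E] (f : P → E → E)
    (q : ℕ → P) (t : ℕ → ℝ) (m : ℕ) (φ : ℝ → E) : Prop :=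
  ∀ i, 1 ≤ i → i ≤ m → ∀ r ∈ Icc (t (i - 1)) (t i),
    HasDerivWithinAt φ (f (q i) (φ r)) (Icc (t (i - 1)) (t i)) r

section SwitchedSystem

variable {n : ℕ} {P : Type*} {f : P → EuclideanSpace ℝ (Fin n) → EuclideanSpace ℝ (Fin n)}
  {ω : EuclideanSpace ℝ (Fin n)} {φ : ℝ → EuclideanSpace ℝ (Fin n)}

lemma IsSwitchedSolution.solvesPiecewise_min {τ : ℕ → ℝ} {σ : ℕ → P} {T : ℝ}
    (hsig : IsSwitchingSignal P τ σ) (hφ : IsSwitchedSolution f τ σ ω T φ) {k : ℕ}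
    (hk : τ k ≤ T) : SolvesPiecewise f σ (fun i => min (τ i) T) (k + 1) φ := by
  intro i hi hik r hr
  have hprev : τ (i - 1) ≤ T := (hsig.1.monotone (by omega)).trans hk
  simp only [min_eq_left hprev] at hr ⊢
  have hr0 : 0 ≤ r := hsig.2.1 ▸ (hsig.1.monotone (Nat.zero_le _)).trans hr.1
  exact (hφ.2.2 i hi r ⟨⟨hr.1, hr.2.trans (min_le_left _ _)⟩, hr0,
    hr.2.trans (min_le_right _ _)⟩).mono (Icc_subset_Icc_right (min_le_left _ _))

lemma exists_isSwitchedSolution_of_solvesPiecewise {τd : ℝ} (hτd : 0 < τd) {m : ℕ}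
    (hm : 1 ≤ m) {q : ℕ → P} {t : ℕ → ℝ} (ht0 : t 0 = 0)
    (hstep : ∀ i, 1 ≤ i → i < m → τd ≤ t i - t (i - 1)) (hlast : t (m - 1) ≤ t m)
    (hφ : Continuous φ) (hφ0 : φ 0 = ω) (hode : SolvesPiecewise f q t m φ) :
    ∃ (τ : ℕ → ℝ) (σ : ℕ → P), IsSwitchingSignal P τ σ ∧ (∀ i, τd ≤ τ (i + 1) - τ i) ∧
      0 ≤ t m ∧ ∃ ψ, IsSwitchedSolution f τ σ ω (t m) ψ ∧ ψ (t m) = φ (t m) := by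
  obtain ⟨τ, hgap, hτt, hτm⟩ := exists_le_sub_succ_extension t hstep (t m)
  have hmono := (strictMono_of_le_sub_succ hτd hgap).monotone
  have hτ0 : τ 0 = 0 := (hτt 0 hm).trans ht0
  have hτpred : τ (m - 1) = t (m - 1) := hτt _ (by omega)
  have hT0 : 0 ≤ t m := calc
    0 = τ 0 := hτ0.symm
    _ ≤ τ (m - 1) := hmono (Nat.zero_le _)
    _ ≤ t m := hτpred ▸ hlast
  refine ⟨τ, fun i => q (min i m), isSwitchingSignal_of_le_sub_succ _ hτd hgap hτ0, hgap, hT0,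
    extendAffine φ (t m) (f (q m) (φ (t m))), ⟨continuous_extendAffine hφ,
    (extendAffine_of_le hT0).trans hφ0, fun i hi s ⟨hs, _, hsT⟩ => ?_⟩, extendAffine_of_le le_rfl⟩
  rcases lt_or_ge i m with him | hmi
  · have hti : t i ≤ t m := hτt i him ▸ (hmono (by omega : i ≤ m - 1)).trans (hτpred ▸ hlast)
    have heq : EqOn (extendAffine φ (t m) (f (q m) (φ (t m)))) φ (Icc (t (i - 1)) (t i)) :=
      fun x hx => extendAffine_of_le (hx.2.trans hti)
    rw [hτt i him, hτt (i - 1) (by omega)] at hs ⊢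
    simpa only [min_eq_left him.le, heq hs] using (hode i hi him.le s hs).congr heq (heq hs)
  · have hsub : Icc (τ (i - 1)) (τ i) ⊆ Icc (t (m - 1)) (τ i) :=
      Icc_subset_Icc_left (hτpred ▸ hmono (by omega))
    simpa only [min_eq_right hmi] using (hasDerivWithinAt_extendAffine_Icc_of_ode
      (hode m hm le_rfl) (hτm.trans (hmono hmi)) ⟨(hsub hs).1, hsT⟩).mono hsub

end SwitchedSystem

theorem slow_switching_adequacy_general {n : ℕ} {P : Type*}
    (f : P → EuclideanSpace ℝ (Fin n) → EuclideanSpace ℝ (Fin n))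
    (τd : ℝ) (hτd : 0 < τd) (ω ν : EuclideanSpace ℝ (Fin n)) :
    (∃ m : ℕ, 1 ≤ m ∧ ∃ (q : ℕ → P) (s : ℕ → ℝ),
      (∀ i : ℕ, 1 ≤ i → i < m → τd ≤ s i) ∧ 0 ≤ s m ∧
      ∃ φ : ℝ → EuclideanSpace ℝ (Fin n), Continuous φ ∧ φ 0 = ω ∧
        φ (∑ j ∈ Finset.Icc 1 m, s j) = ν ∧
        ∀ i : ℕ, 1 ≤ i → i ≤ m →
          ∀ r ∈ Set.Icc (∑ j ∈ Finset.Icc 1 (i - 1), s j) (∑ j ∈ Finset.Icc 1 i, s j),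
            HasDerivWithinAt φ (f (q i) (φ r))
              (Set.Icc (∑ j ∈ Finset.Icc 1 (i - 1), s j) (∑ j ∈ Finset.Icc 1 i, s j)) r) ↔
    (∃ (τ : ℕ → ℝ) (σ : ℕ → P), IsSwitchingSignal P τ σ ∧
      (∀ i : ℕ, τd ≤ τ (i + 1) - τ i) ∧
      ∃ T : ℝ, 0 ≤ T ∧ ∃ φ : ℝ → EuclideanSpace ℝ (Fin n),
        IsSwitchedSolution f τ σ ω T φ ∧ φ T = ν) := by
  constructor
  · rintro ⟨m, hm, q, s, hs, hsm, φ, hφ, hφ0, hφν, hode⟩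
    have hdiff : ∀ i, 1 ≤ i →
        ∑ j ∈ Finset.Icc 1 i, s j - ∑ j ∈ Finset.Icc 1 (i - 1), s j = s i := by
      intro i hi
      obtain ⟨k, rfl⟩ := Nat.exists_eq_add_of_le' hi
      simp [Finset.sum_Icc_succ_top]
    obtain ⟨τ, σ, hsig, hdwell, hT, ψ, hψ, hψT⟩ := exists_isSwitchedSolution_of_solvesPiecewise
      (t := fun i => ∑ j ∈ Finset.Icc 1 i, s j) hτd hm (by simp)
      (fun i hi him => hdiff i hi ▸ hs i hi him)
      (sub_nonneg.1 (hdiff m hm ▸ hsm)) hφ hφ0 hode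
    exact ⟨τ, σ, hsig, hdwell, _, hT, ψ, hψ, hψT.trans hφν⟩
  · rintro ⟨τ, σ, hsig, hdwell, T, hT, φ, hφ, hφT⟩
    obtain ⟨k, hkT, hTk⟩ := exists_le_le_succ_of_tendsto_atTop hsig.2.2 (hsig.2.1 ▸ hT)
    set t : ℕ → ℝ := fun i => min (τ i) T
    have htτ : ∀ i ≤ k, t i = τ i := fun i hi => min_eq_left ((hsig.1.monotone hi).trans hkT)
    have hsum : ∀ i, ∑ j ∈ Finset.Icc 1 i, (t j - t (j - 1)) = t i := fun i => by
      rw [sum_Icc_one_sub_pred, htτ 0 (Nat.zero_le k), hsig.2.1, sub_zero]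
    refine ⟨k + 1, Nat.le_add_left 1 k, σ, fun i => t i - t (i - 1), fun i hi hik => ?_,
      ?_, φ, hφ.1, hφ.2.1, ?_, ?_⟩
    · simpa [htτ i (by omega), htτ (i - 1) (by omega), Nat.sub_add_cancel hi] using
        hdwell (i - 1)
    · exact sub_nonneg.2 (min_le_min_right T (hsig.1.monotone (Nat.le_succ k)))
    · rwa [hsum, show t (k + 1) = T from min_eq_right hTk]
    · simp only [hsum]
      exact hφ.solvesPiecewise_min hsig hkT

theorem slow_switching_adequacy {n : ℕ} {P : Type*} [Fintype P] [Nonempty P]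
    (f : P → EuclideanSpace ℝ (Fin n) → EuclideanSpace ℝ (Fin n))
    (hf : ∀ p, ContDiff ℝ 1 (f p))
    (huniq : ∀ (p : P) (a b : ℝ) (φ ψ : ℝ → EuclideanSpace ℝ (Fin n)),
      (∀ s ∈ Set.Icc a b, HasDerivWithinAt φ (f p (φ s)) (Set.Icc a b) s) →
      (∀ s ∈ Set.Icc a b, HasDerivWithinAt ψ (f p (ψ s)) (Set.Icc a b) s) →
      φ a = ψ a → ∀ s ∈ Set.Icc a b, φ s = ψ s)
    (τd : ℝ) (hτd : 0 < τd) (ω ν : EuclideanSpace ℝ (Fin n)) :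
    (∃ m : ℕ, 1 ≤ m ∧ ∃ (q : ℕ → P) (s : ℕ → ℝ),
      (∀ i : ℕ, 1 ≤ i → i < m → τd ≤ s i) ∧ 0 ≤ s m ∧
      ∃ φ : ℝ → EuclideanSpace ℝ (Fin n), Continuous φ ∧ φ 0 = ω ∧
        φ (∑ j ∈ Finset.Icc 1 m, s j) = ν ∧
        ∀ i : ℕ, 1 ≤ i → i ≤ m →
          ∀ r ∈ Set.Icc (∑ j ∈ Finset.Icc 1 (i - 1), s j) (∑ j ∈ Finset.Icc 1 i, s j),
            HasDerivWithinAt φ (f (q i) (φ r))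
              (Set.Icc (∑ j ∈ Finset.Icc 1 (i - 1), s j) (∑ j ∈ Finset.Icc 1 i, s j)) r) ↔
    (∃ (τ : ℕ → ℝ) (σ : ℕ → P), IsSwitchingSignal P τ σ ∧
      (∀ i : ℕ, τd ≤ τ (i + 1) - τ i) ∧
      ∃ T : ℝ, 0 ≤ T ∧ ∃ φ : ℝ → EuclideanSpace ℝ (Fin n),
        IsSwitchedSolution f τ σ ω T φ ∧ φ T = ν) :=
  slow_switching_adequacy_general f τd hτd ω ν
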